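/- The functions K₁(f) = f₁ and K₂(f) = 2 f₁ f₄ + f₂ f₃ are invariants of the coadjoint action: for every z ∈ ℝ⁴ and every f ∈ ℝ⁴, (Ad*_z f)₁ = f₁ and 2 (Ad*_z f)₁ (Ad*_z f)₄ + (Ad*_z f)₂ (Ad*_z f)₃ = 2 f₁ f₄ + f₂ f₃. -/

import Mathlib

/-- The coadjoint action `Ad*_z` on `𝔤* ≃ ℝ⁴` (indices `0,…,3` for `1,…,4`). -/
noncomputable def coadj (k : ℝ) (z f : Fin 4 → ℝ) : Fin 4 → ℝ :=
  ![f 0,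
    k * z 2 * f 0 + Real.exp (-(k * z 3) / 2) * f 1,
    -k * z 1 * f 0 + Real.exp (k * z 3 / 2) * f 2,
    k ^ 2 / 2 * z 1 * z 2 * f 0 + k / 2 * z 1 * Real.exp (-(k * z 3) / 2) * f 1
      - k / 2 * z 2 * Real.exp (k * z 3 / 2) * f 2 + f 3]

theorem coadjoint_invariants_general (k : ℝ) (z f : Fin 4 → ℝ) :
    coadj k z f 0 = f 0 ∧
    2 * coadj k z f 0 * coadj k z f 3 + coadj k z f 1 * coadj k z f 2
      = 2 * f 0 * f 3 + f 1 * f 2 := by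
  have hexp : Real.exp (-(k * z 3) / 2) * Real.exp (k * z 3 / 2) = 1 := by
    rw [neg_div, Real.exp_neg, inv_mul_cancel₀ (Real.exp_pos _).ne']
  refine ⟨rfl, ?_⟩
  simp only [coadj, Matrix.cons_val]
  -- the terms in `z 1`, `z 2` cancel as a polynomial identity; only `e^{-t} e^t = 1` is needed
  linear_combination f 1 * f 2 * hexp

/-- `K₁(f) = f₁` and `K₂(f) = 2 f₁ f₄ + f₂ f₃` are invariants of the
coadjoint action. -/
theorem coadjoint_invariants (k : ℝ) (hk : 0 < k) (z f : Fin 4 → ℝ) :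
    coadj k z f 0 = f 0 ∧
    2 * coadj k z f 0 * coadj k z f 3 + coadj k z f 1 * coadj k z f 2
      = 2 * f 0 * f 3 + f 1 * f 2 :=
  coadjoint_invariants_general k z f
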